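/- Fix l ∈ ℂ with Im(l) ≠ 0 and k ∈ {0,1}. For any t ∈ ℝ, the (g_t,K)-submodule of the Laurent-type module span_ℂ{z^{n+k/2} : n ∈ ℤ} generated by the minimal K-type vectors (z⁰ if k=0; z^{1/2} and z^{-1/2} if k=1) under the operators E_t = t(-∂_z+1/(2z)) - l/(2z), F_t = t(z²∂_z+z/2) - (l/2)z, H_t = -2z∂_z is the whole module. Concretely: F_t z^{m+k/2} = (t(m+(k+1)/2) - l/2) z^{m+1+k/2} with nonzero coefficient for all m and all real t, and similarly for E_t in the negative direction, so every z^{n+k/2} lies in the generated submodule. -/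

import Mathlib

/-
The operators `F_t` and `E_t` shift the basis vector `z^(m+k/2)` up resp. down by one, with
coefficients of the form `t x - l/2` for a real number `x`. Since `Im l ≠ 0` these coefficients
never vanish, so from `z^0` alone one climbs up and down to every basis vector.
-/

/-- Operator on the free ℂ-module on basis `z^(n + k/2)`, `n ∈ ℤ`
(encoded as `ℤ →₀ ℂ`), sending the `p`-th basis vector to `a p` times the
`(p+s)`-th one. -/
noncomputable def sop (a : ℤ → ℂ) (s : ℤ) : Module.End ℂ (ℤ →₀ ℂ) :=
  Finsupp.lsum ℂ fun p => a p • Finsupp.lsingle (p + s)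

/-- `E_t = t(-∂_z + 1/(2z)) - l/(2z)` : `z^(m+k/2) ↦ (t(-(m+k/2) + 1/2) - l/2) z^(m-1+k/2)`. -/
noncomputable def Et (t : ℝ) (k l : ℂ) : Module.End ℂ (ℤ →₀ ℂ) :=
  sop (fun m => (t : ℂ) * (-((m : ℂ) + k / 2) + 1 / 2) - l / 2) (-1)
/-- `F_t = t(z² ∂_z + z/2) - (l/2) z` : `z^(m+k/2) ↦ (t((m+k/2) + 1/2) - l/2) z^(m+1+k/2)`. -/
noncomputable def Ft (t : ℝ) (k l : ℂ) : Module.End ℂ (ℤ →₀ ℂ) :=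
  sop (fun m => (t : ℂ) * (((m : ℂ) + k / 2) + 1 / 2) - l / 2) 1
/-- `H_t = -2 z ∂_z`. -/
noncomputable def Ht (k : ℂ) : Module.End ℂ (ℤ →₀ ℂ) :=
  sop (fun m => -2 * ((m : ℂ) + k / 2)) 0

theorem sop_single (a : ℤ → ℂ) (s m : ℤ) :
    sop a s (Finsupp.single m 1) = a m • Finsupp.single (m + s) 1 := by
  simp only [sop, Finsupp.lsum_single, LinearMap.smul_apply, Finsupp.lsingle_apply,
    Finsupp.smul_single, smul_eq_mul, mul_one]

theorem single_add_mem_of_sop_mem {p : Submodule ℂ (ℤ →₀ ℂ)} {a : ℤ → ℂ} {s m : ℤ}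
    (hp : ∀ x ∈ p, sop a s x ∈ p) (ha : a m ≠ 0) (hm : Finsupp.single m 1 ∈ p) :
    Finsupp.single (m + s) (1 : ℂ) ∈ p := by
  have h := p.smul_mem (a m)⁻¹ (hp _ hm)
  rwa [sop_single, smul_smul, inv_mul_cancel₀ ha, one_smul] at h

theorem single_mem_of_sop_up_down_mem {p : Submodule ℂ (ℤ →₀ ℂ)} {a b : ℤ → ℂ}
    (ha : ∀ m, a m ≠ 0) (hb : ∀ m, b m ≠ 0)
    (hup : ∀ x ∈ p, sop a 1 x ∈ p) (hdown : ∀ x ∈ p, sop b (-1) x ∈ p)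
    (h0 : Finsupp.single 0 (1 : ℂ) ∈ p) (n : ℤ) : Finsupp.single n (1 : ℂ) ∈ p := by
  induction n using Int.induction_on with
  | zero => exact h0
  | succ i ih => exact single_add_mem_of_sop_mem hup (ha i) ih
  | pred i ih =>
    rw [sub_eq_add_neg]
    exact single_add_mem_of_sop_mem hdown (hb _) ih

theorem ofReal_mul_sub_half_ne_zero {l x : ℂ} (hl : l.im ≠ 0) (hx : x.im = 0) (t : ℝ) :
    (t : ℂ) * x - l / 2 ≠ 0 := by
  intro h
  apply hl
  simpa [hx] using congrArg Complex.im h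

theorem minimal_K_type_generates (k l : ℂ) (hk : k = 0 ∨ k = 1)
    (hl : l.im ≠ 0) (t : ℝ) :
    (∀ m : ℤ, (t : ℂ) * ((m : ℂ) + (k + 1) / 2) - l / 2 ≠ 0) ∧
    (∀ m : ℤ, Ft t k l (Finsupp.single m 1) =
      ((t : ℂ) * ((m : ℂ) + (k + 1) / 2) - l / 2) • Finsupp.single (m + 1) 1) ∧
    (∀ p : Submodule ℂ (ℤ →₀ ℂ),
      Finsupp.single 0 (1 : ℂ) ∈ p →
      (k = 1 → Finsupp.single (-1 : ℤ) (1 : ℂ) ∈ p) →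
      (∀ x ∈ p, Et t k l x ∈ p) →
      (∀ x ∈ p, Ft t k l x ∈ p) →
      (∀ x ∈ p, Ht k x ∈ p) →
      ∀ n : ℤ, Finsupp.single n (1 : ℂ) ∈ p) := by
  have hk_im : k.im = 0 := by rcases hk with rfl | rfl <;> simp
  have hF_ne : ∀ m : ℤ, (t : ℂ) * ((m : ℂ) + (k + 1) / 2) - l / 2 ≠ 0 := fun m =>
    ofReal_mul_sub_half_ne_zero hl (by simp [hk_im]) t
  have hE_ne : ∀ m : ℤ, (t : ℂ) * (-((m : ℂ) + k / 2) + 1 / 2) - l / 2 ≠ 0 := fun m =>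
    ofReal_mul_sub_half_ne_zero hl (by simp [hk_im]) t
  have hF_eq : ∀ m : ℤ, (t : ℂ) * (((m : ℂ) + k / 2) + 1 / 2) - l / 2 =
      (t : ℂ) * ((m : ℂ) + (k + 1) / 2) - l / 2 := fun m => by ring
  refine ⟨hF_ne, fun m => by rw [Ft, sop_single, hF_eq], ?_⟩
  intro p h0 _ hE hF _
  exact single_mem_of_sop_up_down_mem (fun m => hF_eq m ▸ hF_ne m) hE_ne hF hE h0
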